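/- arXiv:1410.8195 — 2 statements merged into one kernel-verified Lean document; each statement's English description precedes it below -/
import Mathlib

section
/- Let Y be a CAT(1) space and let Δ ⊂ Y be an isometrically embedded spherical k-simplex (contained in an open hemisphere) with vertices v_0, …, v_k. If v ∈ Δ and v' ∈ Y satisfy d(v', v_i) ≤ d(v, v_i) for all i = 0, …, k, then v' = v. -/
noncomputable section

open Metric Set

/-- A unit-speed geodesic segment from `x` to `y`, parametrized on `[0, dist x y]`. -/
def IsGeodesicSegment {X : Type*} [MetricSpace X] (γ : ℝ → X) (x y : X) : Prop :=
  γ 0 = x ∧ γ (dist x y) = y ∧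
    ∀ s ∈ Set.Icc 0 (dist x y), ∀ t ∈ Set.Icc 0 (dist x y), dist (γ s) (γ t) = |s - t|

/-- A unit-speed geodesic ray, parametrized on `[0, ∞)`. -/
def IsGeodesicRay {X : Type*} [MetricSpace X] (γ : ℝ → X) : Prop :=
  ∀ s t : ℝ, 0 ≤ s → 0 ≤ t → dist (γ s) (γ t) = |s - t|

/-- A geodesic metric space: any two points are joined by a geodesic segment. -/
def GeodesicMetricSpace (X : Type*) [MetricSpace X] : Prop :=
  ∀ x y : X, ∃ γ : ℝ → X, IsGeodesicSegment γ x y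

/-- `m` is a midpoint of `x` and `y`. -/
def IsMidpoint {X : Type*} [MetricSpace X] (m x y : X) : Prop :=
  dist x m = dist x y / 2 ∧ dist m y = dist x y / 2

/-- A CAT(0) space: a geodesic metric space in which midpoints satisfy the
CN-inequality of Bruhat and Tits. -/
def CAT0Space (X : Type*) [MetricSpace X] : Prop :=
  GeodesicMetricSpace X ∧
    ∀ x y z m : X, IsMidpoint m y z →
      dist x m ^ 2 ≤ (dist x y ^ 2 + dist x z ^ 2) / 2 - dist y z ^ 2 / 4

/-- A CAT(1) space (with metric truncated at `π`): diameter at most `π`, points at distance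
`< π` are joined by geodesics, and triangles of perimeter `< 2π` satisfy the spherical
comparison (CN-type) inequality for midpoints. -/
def CAT1Space (X : Type*) [MetricSpace X] : Prop :=
  (∀ x y : X, dist x y ≤ Real.pi) ∧
  (∀ x y : X, dist x y < Real.pi → ∃ γ : ℝ → X, IsGeodesicSegment γ x y) ∧
  (∀ x y z m : X, IsMidpoint m y z → dist x y + dist y z + dist z x < 2 * Real.pi →
      (Real.cos (dist x y) + Real.cos (dist x z)) / 2 ≤
        Real.cos (dist x m) * Real.cos (dist y z / 2))

/-- Geodesic convexity of a subset. -/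
def GeodConvex {X : Type*} [MetricSpace X] (S : Set X) : Prop :=
  ∀ x ∈ S, ∀ y ∈ S, ∀ γ : ℝ → X, IsGeodesicSegment γ x y →
    ∀ t ∈ Set.Icc 0 (dist x y), γ t ∈ S

/-- The geodesic convex hull of a subset. -/
def geodConvexHull {X : Type*} [MetricSpace X] (S : Set X) : Set X :=
  ⋂₀ {T : Set X | S ⊆ T ∧ GeodConvex T}

/-- The Euclidean comparison angle at `p` of the triangle `p x y`. -/
def cmpAngle {X : Type*} [MetricSpace X] (p x y : X) : ℝ :=
  Real.arccos ((dist p x ^ 2 + dist p y ^ 2 - dist x y ^ 2) / (2 * dist p x * dist p y))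

/-- The Alexandrov angle between two unit-speed geodesics issuing from the same point,
defined as the infimum of comparison angles (which, in a CAT(0) space, is the limit of
the comparison angles as the parameters tend to `0`). -/
def alexAngle {X : Type*} [MetricSpace X] (γ₁ γ₂ : ℝ → X) : ℝ :=
  sInf {θ : ℝ | ∃ s t : ℝ, 0 < s ∧ 0 < t ∧ θ = cmpAngle (γ₁ 0) (γ₁ s) (γ₂ t)}

/-- The Tits angle between two geodesic rays, via the asymptotic formula
`2 sin(∠_T/2) = lim_{t → ∞} d(γ₁(t), γ₂(t))/t`. -/
def titsAngle {X : Type*} [MetricSpace X] (γ₁ γ₂ : ℝ → X) : ℝ :=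
  2 * Real.arcsin ((Filter.limsup (fun t : ℝ => dist (γ₁ t) (γ₂ t) / t) Filter.atTop) / 2)

/-- Two geodesic rays are parallel. -/
def ParallelRays {X : Type*} [MetricSpace X] (γ₁ γ₂ : ℝ → X) : Prop :=
  ∀ t : ℝ, 0 ≤ t → dist (γ₁ t) (γ₂ t) = dist (γ₁ 0) (γ₂ 0)

/-- An `(L, A)`-quasi-isometric embedding. -/
def QuasiIsometricEmbedding {X Y : Type*} [MetricSpace X] [MetricSpace Y]
    (L A : ℝ) (f : X → Y) : Prop :=
  ∀ x y : X, dist x y / L - A ≤ dist (f x) (f y) ∧ dist (f x) (f y) ≤ L * dist x y + A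

/-- An `(L, A)`-quasi-isometry: a quasi-isometric embedding with `A`-dense image. -/
def QuasiIsometry {X Y : Type*} [MetricSpace X] [MetricSpace Y]
    (L A : ℝ) (f : X → Y) : Prop :=
  QuasiIsometricEmbedding L A f ∧ ∀ y : Y, ∃ x : X, dist (f x) y ≤ A

/-- Two subsets are at finite Hausdorff distance. -/
def FinHausdorffDist {X : Type*} [MetricSpace X] (A B : Set X) : Prop :=
  EMetric.hausdorffEdist A B ≠ ⊤

open scoped RealInnerProductSpace

/-- The point of the unit sphere determined by barycentric coordinates `c` with respect to
unit vectors `v i`: the normalization of `∑ i, c i • v i`. -/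
noncomputable def sphPt {k : ℕ} (v : Fin (k + 1) → EuclideanSpace ℝ (Fin (k + 1)))
    (c : stdSimplex ℝ (Fin (k + 1))) : EuclideanSpace ℝ (Fin (k + 1)) :=
  ‖∑ i, c.1 i • v i‖⁻¹ • ∑ i, c.1 i • v i

/-- The `i`-th vertex of the standard simplex. -/
def simplexVertex {k : ℕ} (i : Fin (k + 1)) : stdSimplex ℝ (Fin (k + 1)) :=
  ⟨fun j => if j = i then 1 else 0, by
    constructor
    · intro j; dsimp only; split <;> norm_num
    · simp⟩

namespace SP0
/-- The `i`-th vertex coefficient vector. -/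
def evtx {k : ℕ} (i : Fin (k + 1)) : Fin (k + 1) → ℝ := fun j => if j = i then 1 else 0

/-- The "strictly-between closure" interval lemma. -/
lemma icc_subset_of_between {T : Set ℝ} (hT : IsClosed T) (h0 : (0:ℝ) ∈ T) (h1 : (1:ℝ) ∈ T)
    (hsub : T ⊆ Icc 0 1)
    (hbet : ∀ s ∈ T, ∀ t ∈ T, s < t → ∃ r ∈ T, s < r ∧ r < t) :
    Icc (0:ℝ) 1 ⊆ T := by
  intro x hx
  by_contra hxT
  have hT₁c : IsClosed (T ∩ Iic x) := hT.inter isClosed_Iic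
  have hT₂c : IsClosed (T ∩ Ici x) := hT.inter isClosed_Ici
  have hne₁ : (T ∩ Iic x).Nonempty := ⟨0, h0, hx.1⟩
  have hne₂ : (T ∩ Ici x).Nonempty := ⟨1, h1, hx.2⟩
  have hbdd₁ : BddAbove (T ∩ Iic x) := ⟨x, fun y hy => hy.2⟩
  have hbdd₂ : BddBelow (T ∩ Ici x) := ⟨x, fun y hy => hy.2⟩
  have hsm := hT₁c.csSup_mem hne₁ hbdd₁
  have him := hT₂c.csInf_mem hne₂ hbdd₂
  have hax : sSup (T ∩ Iic x) ≤ x := csSup_le hne₁ fun y hy => hy.2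
  have hxb : x ≤ sInf (T ∩ Ici x) := le_csInf hne₂ fun y hy => hy.2
  have hax' : sSup (T ∩ Iic x) < x :=
    lt_of_le_of_ne hax (fun h => hxT (h ▸ hsm.1))
  have hxb' : x < sInf (T ∩ Ici x) :=
    lt_of_le_of_ne hxb (fun h => hxT (h ▸ him.1))
  obtain ⟨r, hrT, har, hrb⟩ := hbet _ hsm.1 _ him.1 (hax'.trans hxb')
  rcases le_total r x with h | h
  · have : r ≤ sSup (T ∩ Iic x) := le_csSup hbdd₁ ⟨hrT, h⟩
    linarith
  · have : sInf (T ∩ Ici x) ≤ r := csInf_le hbdd₂ ⟨hrT, h⟩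
    linarith

/-- The key trig inequality in the "perimeter ≥ 2π" case. -/
lemma key_trig {A B D d : ℝ} (_hA0 : 0 ≤ A) (hAπ : A ≤ Real.pi)
    (_hB0 : 0 ≤ B) (hBπ : B ≤ Real.pi) (hD0 : 0 ≤ D) (hDπ : D ≤ Real.pi)
    (hd0 : 0 ≤ d) (hdA : d ≤ A + D/2) (hdB : d ≤ B + D/2)
    (hbad : 2 * Real.pi ≤ A + B + D) :
    Real.cos A + Real.cos B ≤ 2 * (Real.cos d * Real.cos (D/2)) := by
  have hπ := Real.pi_pos
  have hcD2 : 0 ≤ Real.cos (D/2) :=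
    Real.cos_nonneg_of_mem_Icc ⟨by linarith, by linarith⟩
  have hsum : ∀ x : ℝ, Real.cos (x + D) + Real.cos x = 2 * (Real.cos (x + D/2) * Real.cos (D/2)) := by
    intro x
    have e1 : Real.cos (x + D) = Real.cos ((x + D/2) + D/2) := by ring_nf
    have e2 : Real.cos x = Real.cos ((x + D/2) - D/2) := by ring_nf
    rw [e1, e2, Real.cos_add, Real.cos_sub]; ring
  have h2pi : ∀ x : ℝ, Real.cos (2 * Real.pi - x) = Real.cos x := by
    intro x
    rw [show 2 * Real.pi - x = -x + 2 * Real.pi by ring, Real.cos_add_two_pi, Real.cos_neg]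
  by_cases hA' : A + D/2 ≤ Real.pi
  · have h1 : Real.cos (A + D/2) ≤ Real.cos d :=
      Real.cos_le_cos_of_nonneg_of_le_pi hd0 hA' hdA
    have h2 : Real.cos B ≤ Real.cos (A + D) := by
      have h3 : Real.cos B ≤ Real.cos (2 * Real.pi - (A + D)) :=
        Real.cos_le_cos_of_nonneg_of_le_pi (by linarith) hBπ (by linarith)
      rwa [h2pi] at h3
    have h4 := hsum A
    nlinarith
  · by_cases hB' : B + D/2 ≤ Real.pi
    · have h1 : Real.cos (B + D/2) ≤ Real.cos d :=
        Real.cos_le_cos_of_nonneg_of_le_pi hd0 hB' hdB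
      have h2 : Real.cos A ≤ Real.cos (B + D) := by
        have h3 : Real.cos A ≤ Real.cos (2 * Real.pi - (B + D)) :=
          Real.cos_le_cos_of_nonneg_of_le_pi (by linarith) hAπ (by linarith)
        rwa [h2pi] at h3
      have h4 := hsum B
      nlinarith
    · have h1 : Real.cos A ≤ Real.cos (Real.pi - D/2) :=
        Real.cos_le_cos_of_nonneg_of_le_pi (by linarith) hAπ (by linarith)
      have h2 : Real.cos B ≤ Real.cos (Real.pi - D/2) :=
        Real.cos_le_cos_of_nonneg_of_le_pi (by linarith) hBπ (by linarith)
      rw [Real.cos_pi_sub] at h1 h2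
      have h3 : -1 ≤ Real.cos d := Real.neg_one_le_cos d
      nlinarith


variable {E : Type*} [NormedAddCommGroup E] [InnerProductSpace ℝ E]

/-- Normalization of a vector. -/
noncomputable def nzv (x : E) : E := ‖x‖⁻¹ • x

lemma nzv_smul {t : ℝ} (ht : 0 < t) (x : E) : nzv (t • x) = nzv x := by
  rcases eq_or_ne x 0 with rfl | hx
  · simp [nzv]
  · have hxn : ‖x‖ ≠ 0 := norm_ne_zero_iff.2 hx
    unfold nzv
    rw [norm_smul, Real.norm_eq_abs, abs_of_pos ht, mul_inv, smul_smul]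
    congr 1
    field_simp
lemma norm_nzv {x : E} (hx : x ≠ 0) : ‖nzv x‖ = 1 := by
  have hxn : ‖x‖ ≠ 0 := norm_ne_zero_iff.2 hx
  rw [nzv, norm_smul, Real.norm_eq_abs, abs_of_pos (by positivity)]
  field_simp

lemma inner_nzv_left (x q : E) : ⟪nzv x, q⟫ = ‖x‖⁻¹ * ⟪x, q⟫ := by
  rw [nzv, real_inner_smul_left]

lemma inner_nzv_pos {u x : E} (hx : 0 < ⟪u, x⟫) : 0 < ⟪u, nzv x⟫ := by
  have hxne : x ≠ 0 := by rintro rfl; simp at hx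
  rw [nzv, real_inner_smul_right]
  exact mul_pos (inv_pos.2 (norm_pos_iff.2 hxne)) hx

lemma unit_inner_le_one {X Z : E} (hX : ‖X‖ = 1) (hZ : ‖Z‖ = 1) : ⟪X, Z⟫ ≤ 1 := by
  have := abs_real_inner_le_norm X Z
  rw [hX, hZ] at this
  calc ⟪X, Z⟫ ≤ |⟪X, Z⟫| := le_abs_self _
    _ ≤ 1 := by simpa using this

lemma unit_neg_one_le {X Z : E} (hX : ‖X‖ = 1) (hZ : ‖Z‖ = 1) : -1 ≤ ⟪X, Z⟫ := by
  have := abs_real_inner_le_norm X Z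
  rw [hX, hZ] at this
  have h := neg_abs_le ⟪X, Z⟫
  simp only [mul_one] at this
  linarith [abs_nonneg ⟪X, Z⟫]

lemma unit_neg_one_lt {u X Z : E} (hX : ‖X‖ = 1) (hZ : ‖Z‖ = 1)
    (huX : 0 < ⟪u, X⟫) (huZ : 0 < ⟪u, Z⟫) : -1 < ⟪X, Z⟫ := by
  rcases lt_or_ge (-1) ⟪X, Z⟫ with h | h
  · exact h
  exfalso
  have heq : ⟪X, Z⟫ = -1 := le_antisymm h (unit_neg_one_le hX hZ)
  have hsum : ‖X + Z‖ ^ 2 = 0 := by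
    rw [norm_add_sq_real, hX, hZ, heq]; ring
  have hXZ : X + Z = 0 := by
    have := pow_eq_zero_iff (n := 2) (by norm_num) |>.1 hsum
    exact norm_eq_zero.1 this
  have : ⟪u, X + Z⟫ = 0 := by rw [hXZ, inner_zero_right]
  rw [inner_add_right] at this
  linarith

/-- Norm of the sum of two unit vectors, in terms of the half angle. -/
lemma norm_add_unit {u X Z : E} (hX : ‖X‖ = 1) (hZ : ‖Z‖ = 1)
    (huX : 0 < ⟪u, X⟫) (huZ : 0 < ⟪u, Z⟫) :
    ‖X + Z‖ = 2 * Real.cos (Real.arccos ⟪X, Z⟫ / 2) := by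
  have hw1 : ⟪X, Z⟫ ≤ 1 := unit_inner_le_one hX hZ
  have hw2 : -1 < ⟪X, Z⟫ := unit_neg_one_lt hX hZ huX huZ
  have hθπ : Real.arccos ⟪X, Z⟫ < Real.pi :=
    lt_of_le_of_ne (Real.arccos_le_pi _) (fun h => by
      have := Real.arccos_eq_pi.1 h; linarith)
  have hθ0 : 0 ≤ Real.arccos ⟪X, Z⟫ := Real.arccos_nonneg _
  have hc2 : 0 < Real.cos (Real.arccos ⟪X, Z⟫ / 2) :=
    Real.cos_pos_of_mem_Ioo ⟨by linarith [Real.pi_pos], by linarith⟩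
  have hcos : Real.cos (Real.arccos ⟪X, Z⟫) = ⟪X, Z⟫ := Real.cos_arccos hw2.le hw1
  have hsq : ‖X + Z‖ ^ 2 = (2 * Real.cos (Real.arccos ⟪X, Z⟫ / 2)) ^ 2 := by
    have hhalf := Real.cos_sq (Real.arccos ⟪X, Z⟫ / 2)
    rw [show 2 * (Real.arccos ⟪X, Z⟫ / 2) = Real.arccos ⟪X, Z⟫ by ring, hcos] at hhalf
    rw [norm_add_sq_real, hX, hZ]
    nlinarith
  have h1 : ‖X + Z‖ = Real.sqrt (‖X + Z‖ ^ 2) := (Real.sqrt_sq (norm_nonneg _)).symm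
  rw [h1, hsq, Real.sqrt_sq (by positivity)]

/-- Inner product of `X` with the normalized sum. -/
lemma inner_nzv_add_left {u X Z : E} (hX : ‖X‖ = 1) (hZ : ‖Z‖ = 1)
    (huX : 0 < ⟪u, X⟫) (huZ : 0 < ⟪u, Z⟫) :
    ⟪X, nzv (X + Z)⟫ = Real.cos (Real.arccos ⟪X, Z⟫ / 2) := by
  have hw1 : ⟪X, Z⟫ ≤ 1 := unit_inner_le_one hX hZ
  have hw2 : -1 < ⟪X, Z⟫ := unit_neg_one_lt hX hZ huX huZ
  have hθπ : Real.arccos ⟪X, Z⟫ < Real.pi :=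
    lt_of_le_of_ne (Real.arccos_le_pi _) (fun h => by
      have := Real.arccos_eq_pi.1 h; linarith)
  have hθ0 : 0 ≤ Real.arccos ⟪X, Z⟫ := Real.arccos_nonneg _
  have hc2 : 0 < Real.cos (Real.arccos ⟪X, Z⟫ / 2) :=
    Real.cos_pos_of_mem_Ioo ⟨by linarith [Real.pi_pos], by linarith⟩
  have hcos : Real.cos (Real.arccos ⟪X, Z⟫) = ⟪X, Z⟫ := Real.cos_arccos hw2.le hw1
  have hn := norm_add_unit hX hZ huX huZ
  have hXX : ⟪X, X⟫ = 1 := by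
    rw [real_inner_self_eq_norm_sq, hX]; norm_num
  have hhalf := Real.cos_sq (Real.arccos ⟪X, Z⟫ / 2)
  rw [show 2 * (Real.arccos ⟪X, Z⟫ / 2) = Real.arccos ⟪X, Z⟫ by ring, hcos] at hhalf
  rw [nzv, real_inner_smul_right, inner_add_right, hXX, hn]
  rw [mul_inv]
  field_simp
  nlinarith

lemma inner_nzv_add_right {u X Z : E} (hX : ‖X‖ = 1) (hZ : ‖Z‖ = 1)
    (huX : 0 < ⟪u, X⟫) (huZ : 0 < ⟪u, Z⟫) :
    ⟪nzv (X + Z), Z⟫ = Real.cos (Real.arccos ⟪X, Z⟫ / 2) := by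
  have h := inner_nzv_add_left hZ hX huZ huX
  rw [add_comm Z X] at h
  rw [real_inner_comm Z X]
  rw [show ⟪nzv (X + Z), Z⟫ = ⟪Z, nzv (X + Z)⟫ from real_inner_comm _ _]
  exact h

variable {k : ℕ}

/-- The cone point with coefficients `a`. -/
noncomputable def ptA (v : Fin (k + 1) → EuclideanSpace ℝ (Fin (k + 1)))
    (a : Fin (k + 1) → ℝ) : EuclideanSpace ℝ (Fin (k + 1)) := ∑ i, a i • v i

/-- Admissible coefficient vectors. -/
def Adm (u : EuclideanSpace ℝ (Fin (k + 1))) (v : Fin (k + 1) → EuclideanSpace ℝ (Fin (k + 1)))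
    (a : Fin (k + 1) → ℝ) : Prop :=
  (∀ i, 0 ≤ a i) ∧ 0 < ⟪u, ptA v a⟫

/-- Barycentric normalization of a coefficient vector (junk value if not admissible). -/
noncomputable def coordA (a : Fin (k + 1) → ℝ) : stdSimplex ℝ (Fin (k + 1)) :=
  if h : (∀ i, 0 ≤ a i) ∧ 0 < ∑ j, a j then
    ⟨fun i => a i / ∑ j, a j, ⟨fun i => div_nonneg (h.1 i) h.2.le, by
      rw [← Finset.sum_div]; exact div_self (ne_of_gt h.2)⟩⟩
  else simplexVertex 0

lemma ptA_linear (v : Fin (k + 1) → EuclideanSpace ℝ (Fin (k + 1))) (s t : ℝ)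
    (a b : Fin (k + 1) → ℝ) :
    ptA v (s • a + t • b) = s • ptA v a + t • ptA v b := by
  unfold ptA
  rw [Finset.smul_sum, Finset.smul_sum, ← Finset.sum_add_distrib]
  refine Finset.sum_congr rfl fun i _ => ?_
  simp only [Pi.add_apply, Pi.smul_apply, smul_eq_mul, add_smul, smul_smul]

lemma inner_ptA (u : EuclideanSpace ℝ (Fin (k + 1))) (v : Fin (k + 1) → EuclideanSpace ℝ (Fin (k + 1)))
    (a : Fin (k + 1) → ℝ) : ⟪u, ptA v a⟫ = ∑ i, a i * ⟪u, v i⟫ := by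
  unfold ptA
  rw [inner_sum]
  exact Finset.sum_congr rfl fun i _ => real_inner_smul_right _ _ _

lemma Adm.sum_pos {u v} {a : Fin (k + 1) → ℝ} (h : Adm u v a) : 0 < ∑ j, a j := by
  rcases h with ⟨h0, hpos⟩
  by_contra hs
  push_neg at hs
  have hz : ∀ j ∈ Finset.univ, a j = 0 := by
    intro j _
    have := (Finset.sum_eq_zero_iff_of_nonneg (fun i _ => h0 i)).1
      (le_antisymm hs (Finset.sum_nonneg fun i _ => h0 i))
    exact this j (Finset.mem_univ j)
  have : ptA v a = 0 := by
    unfold ptA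
    exact Finset.sum_eq_zero fun i hi => by rw [hz i hi, zero_smul]
  rw [this, inner_zero_right] at hpos
  exact lt_irrefl 0 hpos

lemma Adm.ptA_ne {u v} {a : Fin (k + 1) → ℝ} (h : Adm u v a) : ptA v a ≠ 0 := by
  intro h0
  have := h.2
  rw [h0, inner_zero_right] at this
  exact lt_irrefl 0 this

lemma coordA_eq {a : Fin (k + 1) → ℝ} (h0 : ∀ i, 0 ≤ a i) (hs : 0 < ∑ j, a j) :
    (coordA a).1 = fun i => a i / ∑ j, a j := by
  rw [coordA, dif_pos ⟨h0, hs⟩]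

lemma sphPt_coordA (v : Fin (k + 1) → EuclideanSpace ℝ (Fin (k + 1)))
    {u : EuclideanSpace ℝ (Fin (k + 1))} {a : Fin (k + 1) → ℝ} (h : Adm u v a) :
    sphPt v (coordA a) = nzv (ptA v a) := by
  have hs := h.sum_pos
  have key : ∑ i, (coordA a).1 i • v i = (∑ j, a j)⁻¹ • ptA v a := by
    rw [coordA_eq h.1 hs]
    unfold ptA
    rw [Finset.smul_sum]
    refine Finset.sum_congr rfl fun i _ => ?_
    dsimp only
    rw [smul_smul, div_eq_inv_mul]
  rw [sphPt, key]
  exact nzv_smul (inv_pos.2 hs) _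

/-- Scale invariance of `coordA`. -/
lemma coordA_smul {a : Fin (k + 1) → ℝ} {t : ℝ} (ht : 0 < t)
    (h0 : ∀ i, 0 ≤ a i) (hs : 0 < ∑ j, a j) : coordA (t • a) = coordA a := by
  have h0' : ∀ i, 0 ≤ (t • a) i := fun i => mul_nonneg ht.le (h0 i)
  have hsum : ∑ j, (t • a) j = t * ∑ j, a j := by
    simp only [Pi.smul_apply, smul_eq_mul]
    rw [Finset.mul_sum]
  have hs' : 0 < ∑ j, (t • a) j := by rw [hsum]; positivity
  apply Subtype.ext
  rw [coordA_eq h0' hs', coordA_eq h0 hs]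
  funext i
  simp only [Pi.smul_apply, smul_eq_mul]
  rw [show (∑ x, t * a x) = t * ∑ j, a j from by rw [Finset.mul_sum]]
  rw [mul_div_mul_left _ _ (ne_of_gt ht)]

/-- Admissibility of nonneg combinations. -/
lemma Adm.comb {u v} {a b : Fin (k + 1) → ℝ} (ha : Adm u v a) (hb : Adm u v b)
    {s t : ℝ} (hs : 0 ≤ s) (ht : 0 ≤ t) (hst : 0 < s + t) :
    Adm u v (s • a + t • b) := by
  constructor
  · intro i
    simp only [Pi.add_apply, Pi.smul_apply, smul_eq_mul]
    have := ha.1 i; have := hb.1 i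
    positivity
  · rw [ptA_linear, inner_add_right, real_inner_smul_right, real_inner_smul_right]
    rcases eq_or_lt_of_le hs with rfl | hs'
    · simp only [zero_mul, zero_add]
      have ht' : 0 < t := by linarith
      exact mul_pos ht' hb.2
    · have h1 : 0 < s * ⟪u, ptA v a⟫ := mul_pos hs' ha.2
      have h2 : 0 ≤ t * ⟪u, ptA v b⟫ := mul_nonneg ht hb.2.le
      linarith


section Ylayer
variable {k : ℕ} {Y : Type*} [MetricSpace Y]

/-- The central invariant predicate. -/
def Pp (v : Fin (k + 1) → EuclideanSpace ℝ (Fin (k + 1)))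
    (f : stdSimplex ℝ (Fin (k + 1)) → Y) (v' : Y) (p : EuclideanSpace ℝ (Fin (k + 1)))
    (a : Fin (k + 1) → ℝ) : Prop :=
  ⟪nzv (ptA v a), p⟫ ≤ Real.cos (dist v' (f (coordA a)))

lemma dist_f {u} {v : Fin (k + 1) → EuclideanSpace ℝ (Fin (k + 1))}
    {f : stdSimplex ℝ (Fin (k + 1)) → Y}
    (hf : ∀ c c' : stdSimplex ℝ (Fin (k + 1)),
      dist (f c) (f c') = Real.arccos ⟪sphPt v c, sphPt v c'⟫)
    {a b : Fin (k + 1) → ℝ} (ha : Adm u v a) (hb : Adm u v b) :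
    dist (f (coordA a)) (f (coordA b)) = Real.arccos ⟪nzv (ptA v a), nzv (ptA v b)⟫ := by
  rw [hf, sphPt_coordA v ha, sphPt_coordA v hb]

lemma ptA_smul (v : Fin (k + 1) → EuclideanSpace ℝ (Fin (k + 1))) (t : ℝ)
    (a : Fin (k + 1) → ℝ) : ptA v (t • a) = t • ptA v a := by
  unfold ptA
  rw [Finset.smul_sum]
  exact Finset.sum_congr rfl fun i _ => by
    simp only [Pi.smul_apply, smul_eq_mul, smul_smul]

lemma Pp_smul {u} {v : Fin (k + 1) → EuclideanSpace ℝ (Fin (k + 1))}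
    {f : stdSimplex ℝ (Fin (k + 1)) → Y} {v' : Y} {p : EuclideanSpace ℝ (Fin (k + 1))}
    {a : Fin (k + 1) → ℝ} {t : ℝ} (ht : 0 < t) (ha : Adm u v a) :
    Pp v f v' p (t • a) ↔ Pp v f v' p a := by
  unfold Pp
  rw [coordA_smul ht ha.1 ha.sum_pos, ptA_smul, nzv_smul ht]

/-- The core midpoint step using the CAT(1) comparison inequality. -/
lemma midstep (hY : CAT1Space Y) {u} {v : Fin (k + 1) → EuclideanSpace ℝ (Fin (k + 1))}
    {f : stdSimplex ℝ (Fin (k + 1)) → Y}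
    (hf : ∀ c c' : stdSimplex ℝ (Fin (k + 1)),
      dist (f c) (f c') = Real.arccos ⟪sphPt v c, sphPt v c'⟫)
    {v' : Y} {p : EuclideanSpace ℝ (Fin (k + 1))}
    {A B : Fin (k + 1) → ℝ} (hA : Adm u v A) (hB : Adm u v B)
    (hPA : Pp v f v' p A) (hPB : Pp v f v' p B) :
    Pp v f v' p (‖ptA v A‖⁻¹ • A + ‖ptA v B‖⁻¹ • B) := by
  have hπ := Real.pi_pos
  have hAne := hA.ptA_ne
  have hBne := hB.ptA_ne
  have hsA : (0:ℝ) < ‖ptA v A‖⁻¹ := inv_pos.2 (norm_pos_iff.2 hAne)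
  have hsB : (0:ℝ) < ‖ptA v B‖⁻¹ := inv_pos.2 (norm_pos_iff.2 hBne)
  have hMadm : Adm u v (‖ptA v A‖⁻¹ • A + ‖ptA v B‖⁻¹ • B) :=
    hA.comb hB hsA.le hsB.le (by positivity)
  set X := nzv (ptA v A) with hXdef
  set Z := nzv (ptA v B) with hZdef
  have hXn : ‖X‖ = 1 := norm_nzv hAne
  have hZn : ‖Z‖ = 1 := norm_nzv hBne
  have huX : 0 < ⟪u, X⟫ := inner_nzv_pos hA.2
  have huZ : 0 < ⟪u, Z⟫ := inner_nzv_pos hB.2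
  have hptM : ptA v (‖ptA v A‖⁻¹ • A + ‖ptA v B‖⁻¹ • B) = X + Z := by
    rw [ptA_linear]; rfl
  have hw1 : ⟪X, Z⟫ ≤ 1 := unit_inner_le_one hXn hZn
  have hw2 : -1 < ⟪X, Z⟫ := unit_neg_one_lt hXn hZn huX huZ
  set θ := Real.arccos ⟪X, Z⟫ with hθdef
  have hθ0 : 0 ≤ θ := Real.arccos_nonneg _
  have hθπ : θ < Real.pi :=
    lt_of_le_of_ne (Real.arccos_le_pi _) (fun h => by
      have := Real.arccos_eq_pi.1 h; linarith)
  have hc2 : 0 < Real.cos (θ / 2) :=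
    Real.cos_pos_of_mem_Ioo ⟨by linarith, by linarith⟩
  have hdAB : dist (f (coordA A)) (f (coordA B)) = θ := dist_f hf hA hB
  have hnAdd : ‖X + Z‖ = 2 * Real.cos (θ / 2) := norm_add_unit hXn hZn huX huZ
  have hdAM : dist (f (coordA A)) (f (coordA (‖ptA v A‖⁻¹ • A + ‖ptA v B‖⁻¹ • B))) = θ / 2 := by
    rw [dist_f hf hA hMadm, hptM, inner_nzv_add_left hXn hZn huX huZ]
    exact Real.arccos_cos (by linarith) (by linarith)
  have hdMB : dist (f (coordA (‖ptA v A‖⁻¹ • A + ‖ptA v B‖⁻¹ • B))) (f (coordA B)) = θ / 2 := by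
    rw [dist_f hf hMadm hB, hptM, inner_nzv_add_right hXn hZn huX huZ]
    exact Real.arccos_cos (by linarith) (by linarith)
  have hmid : IsMidpoint (f (coordA (‖ptA v A‖⁻¹ • A + ‖ptA v B‖⁻¹ • B)))
      (f (coordA A)) (f (coordA B)) := by
    constructor
    · rw [hdAM, hdAB]
    · rw [hdMB, hdAB]
  set dA := dist v' (f (coordA A)) with hdAdef
  set dB := dist v' (f (coordA B)) with hdBdef
  set dM := dist v' (f (coordA (‖ptA v A‖⁻¹ • A + ‖ptA v B‖⁻¹ • B))) with hdMdef
  have hdA0 : 0 ≤ dA := dist_nonneg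
  have hdB0 : 0 ≤ dB := dist_nonneg
  have hdM0 : 0 ≤ dM := dist_nonneg
  have hdAπ : dA ≤ Real.pi := hY.1 _ _
  have hdBπ : dB ≤ Real.pi := hY.1 _ _
  have hXp : ⟪X, p⟫ ≤ Real.cos dA := hPA
  have hZp : ⟪Z, p⟫ ≤ Real.cos dB := hPB
  have hkey : ⟪X, p⟫ + ⟪Z, p⟫ ≤ Real.cos dM * (2 * Real.cos (θ / 2)) := by
    by_cases hper : dA + θ + dB < 2 * Real.pi
    · have CN := hY.2.2 v' (f (coordA A)) (f (coordA B))
        (f (coordA (‖ptA v A‖⁻¹ • A + ‖ptA v B‖⁻¹ • B))) hmid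
        (by rw [hdAB, dist_comm (f (coordA B)) v']; exact hper)
      rw [hdAB] at CN
      have := CN
      linarith
    · push_neg at hper
      have h1 : dM ≤ dA + θ / 2 := by
        have h := dist_triangle v' (f (coordA A))
          (f (coordA (‖ptA v A‖⁻¹ • A + ‖ptA v B‖⁻¹ • B)))
        rw [hdAM] at h
        exact h
      have h2 : dM ≤ dB + θ / 2 := by
        have h := dist_triangle v' (f (coordA B))
          (f (coordA (‖ptA v A‖⁻¹ • A + ‖ptA v B‖⁻¹ • B)))
        rw [dist_comm (f (coordA B))
          (f (coordA (‖ptA v A‖⁻¹ • A + ‖ptA v B‖⁻¹ • B))), hdMB] at h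
        exact h
      have ht := key_trig hdA0 hdAπ hdB0 hdBπ hθ0 hθπ.le hdM0 h1 h2 (by linarith)
      linarith
  show ⟪nzv (ptA v (‖ptA v A‖⁻¹ • A + ‖ptA v B‖⁻¹ • B)), p⟫ ≤ Real.cos dM
  rw [hptM, inner_nzv_left, inner_add_left, hnAdd, inv_mul_le_iff₀ (by positivity)]
  calc ⟪X, p⟫ + ⟪Z, p⟫ ≤ Real.cos dM * (2 * Real.cos (θ/2)) := hkey
    _ = 2 * Real.cos (θ/2) * Real.cos dM := by ring

/-- Combination of two admissible vectors along a segment. -/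
lemma seg_lemma (hY : CAT1Space Y) {u} {v : Fin (k + 1) → EuclideanSpace ℝ (Fin (k + 1))}
    {f : stdSimplex ℝ (Fin (k + 1)) → Y}
    (hf : ∀ c c' : stdSimplex ℝ (Fin (k + 1)),
      dist (f c) (f c') = Real.arccos ⟪sphPt v c, sphPt v c'⟫)
    {v' : Y} {p : EuclideanSpace ℝ (Fin (k + 1))}
    {A B : Fin (k + 1) → ℝ} (hA : Adm u v A) (hB : Adm u v B)
    (hPA : Pp v f v' p A) (hPB : Pp v f v' p B) :
    ∀ t ∈ Icc (0:ℝ) 1, Pp v f v' p ((1 - t) • A + t • B) := by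
  set at_ : ℝ → (Fin (k + 1) → ℝ) := fun t => (1 - t) • A + t • B with hat
  have hadm : ∀ t ∈ Icc (0:ℝ) 1, Adm u v (at_ t) := by
    intro t ht
    exact hA.comb hB (by linarith [ht.2]) ht.1 (by linarith)
  -- continuity of the relevant function
  have cptA : Continuous (fun t => ptA v (at_ t)) := by
    have : (fun t => ptA v (at_ t)) = fun t => (1 - t) • ptA v A + t • ptA v B := by
      funext t
      exact ptA_linear v _ _ _ _
    rw [this]
    exact (((continuous_const.sub continuous_id).smul continuous_const).add
      (continuous_id.smul continuous_const))
  have hne : ∀ t ∈ Icc (0:ℝ) 1, ptA v (at_ t) ≠ 0 := fun t ht => (hadm t ht).ptA_ne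
  have cnz : ContinuousOn (fun t => nzv (ptA v (at_ t))) (Icc 0 1) := by
    exact (cptA.continuousOn.norm.inv₀
      (fun t ht => norm_ne_zero_iff.2 (hne t ht))).smul cptA.continuousOn
  have cinner : ContinuousOn (fun t => ⟪nzv (ptA v (at_ t)), p⟫) (Icc 0 1) := by
    have houter : Continuous (fun x : EuclideanSpace ℝ (Fin (k+1)) => ⟪x, p⟫) :=
      continuous_id.inner continuous_const
    exact houter.comp_continuousOn cnz
  have hF : ContinuousOn (fun t => f (coordA (at_ t))) (Icc (0:ℝ) 1) := by
    intro t₀ ht₀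
    rw [ContinuousWithinAt, tendsto_iff_dist_tendsto_zero]
    have heq : ∀ t ∈ Icc (0:ℝ) 1,
        dist (f (coordA (at_ t))) (f (coordA (at_ t₀)))
          = Real.arccos ⟪nzv (ptA v (at_ t)), nzv (ptA v (at_ t₀))⟫ := by
      intro t ht
      exact dist_f hf (hadm t ht) (hadm t₀ ht₀)
    have harc : ContinuousOn
        (fun t => Real.arccos ⟪nzv (ptA v (at_ t)), nzv (ptA v (at_ t₀))⟫) (Icc 0 1) := by
      have houter : Continuous (fun x : EuclideanSpace ℝ (Fin (k+1)) => ⟪x, nzv (ptA v (at_ t₀))⟫) :=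
        continuous_id.inner continuous_const
      exact Real.continuous_arccos.comp_continuousOn (houter.comp_continuousOn cnz)
    have hzero : Real.arccos ⟪nzv (ptA v (at_ t₀)), nzv (ptA v (at_ t₀))⟫ = 0 := by
      have : ⟪nzv (ptA v (at_ t₀)), nzv (ptA v (at_ t₀))⟫ = 1 := by
        rw [real_inner_self_eq_norm_sq, norm_nzv (hne t₀ ht₀)]
        norm_num
      rw [this, Real.arccos_one]
    have h1 := (harc t₀ ht₀).tendsto
    rw [hzero] at h1
    refine Filter.Tendsto.congr' ?_ h1
    filter_upwards [self_mem_nhdsWithin] with t ht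
    exact (heq t ht).symm
  have cdist : ContinuousOn (fun t => Real.cos (dist v' (f (coordA (at_ t))))) (Icc (0:ℝ) 1) := by
    have h1 : ContinuousOn (fun t => dist v' (f (coordA (at_ t)))) (Icc (0:ℝ) 1) :=
      (continuous_const.dist continuous_id).comp_continuousOn hF
    exact Real.continuous_cos.comp_continuousOn h1
  -- the good set
  set T : Set ℝ := Icc 0 1 ∩ (fun t => Real.cos (dist v' (f (coordA (at_ t)))) -
      ⟪nzv (ptA v (at_ t)), p⟫) ⁻¹' (Ici 0) with hTdef
  have hTsub : T ⊆ Icc 0 1 := inter_subset_left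
  have hTmem : ∀ t, t ∈ T ↔ t ∈ Icc (0:ℝ) 1 ∧ Pp v f v' p (at_ t) := by
    intro t
    constructor
    · rintro ⟨h1, h2⟩
      refine ⟨h1, ?_⟩
      have h3 : (0:ℝ) ≤ Real.cos (dist v' (f (coordA (at_ t)))) -
          ⟪nzv (ptA v (at_ t)), p⟫ := h2
      unfold Pp
      linarith
    · rintro ⟨h1, h2⟩
      refine ⟨h1, ?_⟩
      have h3 : ⟪nzv (ptA v (at_ t)), p⟫ ≤ Real.cos (dist v' (f (coordA (at_ t)))) := h2
      show (0:ℝ) ≤ Real.cos (dist v' (f (coordA (at_ t)))) - ⟪nzv (ptA v (at_ t)), p⟫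
      linarith
  have hTclosed : IsClosed T :=
    (cdist.sub cinner).preimage_isClosed_of_isClosed isClosed_Icc isClosed_Ici
  have h0T : (0:ℝ) ∈ T := by
    rw [hTmem]
    refine ⟨by norm_num, ?_⟩
    have : at_ 0 = A := by
      funext i
      simp [hat]
    rw [this]
    exact hPA
  have h1T : (1:ℝ) ∈ T := by
    rw [hTmem]
    refine ⟨by norm_num, ?_⟩
    have : at_ 1 = B := by
      funext i
      simp [hat]
    rw [this]
    exact hPB
  have hbet : ∀ s ∈ T, ∀ t ∈ T, s < t → ∃ r ∈ T, s < r ∧ r < t := by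
    intro s hs t ht hst
    obtain ⟨hs1, hs2⟩ := (hTmem s).1 hs
    obtain ⟨ht1, ht2⟩ := (hTmem t).1 ht
    have hAs : Adm u v (at_ s) := hadm s hs1
    have hAt : Adm u v (at_ t) := hadm t ht1
    set lam := ‖ptA v (at_ s)‖⁻¹ with hlam
    set mu := ‖ptA v (at_ t)‖⁻¹ with hmu
    have hlam0 : 0 < lam := inv_pos.2 (norm_pos_iff.2 hAs.ptA_ne)
    have hmu0 : 0 < mu := inv_pos.2 (norm_pos_iff.2 hAt.ptA_ne)
    have hstep := midstep hY hf hAs hAt hs2 ht2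
    set r := (lam * s + mu * t) / (lam + mu) with hr
    have hlm : 0 < lam + mu := by linarith
    have hrs : s < r := by
      rw [hr, lt_div_iff₀ hlm]
      nlinarith
    have hrt : r < t := by
      rw [hr, div_lt_iff₀ hlm]
      nlinarith
    have hrIcc : r ∈ Icc (0:ℝ) 1 := ⟨le_trans hs1.1 hrs.le, le_trans hrt.le ht1.2⟩
    have hrmul : (lam + mu) * r = lam * s + mu * t := by
      rw [hr]
      field_simp
    have hcomb : lam • at_ s + mu • at_ t = (lam + mu) • at_ r := by
      funext i
      simp only [hat, Pi.add_apply, Pi.smul_apply, smul_eq_mul]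
      linear_combination (A i - B i) * hrmul
    rw [hcomb] at hstep
    have hPr : Pp v f v' p (at_ r) := (Pp_smul hlm (hadm r hrIcc)).1 hstep
    exact ⟨r, (hTmem r).2 ⟨hrIcc, hPr⟩, hrs, hrt⟩
  intro t ht
  have := icc_subset_of_between hTclosed h0T h1T hTsub hbet ht
  exact ((hTmem t).1 this).2

end Ylayer

end SP0

/-- Let `Y` be a CAT(1) space and let `Δ ⊆ Y` be an isometrically
embedded spherical `k`-simplex (spanned by unit vectors `v 0, …, v k` in general position,
contained in an open hemisphere), parametrized by `f` on barycentric coordinates. If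
`v = f c ∈ Δ` and `v' ∈ Y` satisfy `d(v', vᵢ) ≤ d(v, vᵢ)` for every vertex `vᵢ`, then
`v' = v`. -/
theorem eq_of_dist_to_vertices_le {Y : Type*} [MetricSpace Y] (hY : CAT1Space Y)
    (k : ℕ) (v : Fin (k + 1) → EuclideanSpace ℝ (Fin (k + 1)))
    (hnorm : ∀ i, ‖v i‖ = 1) (hind : LinearIndependent ℝ v)
    (hhem : ∃ u : EuclideanSpace ℝ (Fin (k + 1)), ∀ i, 0 < ⟪u, v i⟫)
    (f : stdSimplex ℝ (Fin (k + 1)) → Y)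
    (hf : ∀ c c' : stdSimplex ℝ (Fin (k + 1)),
      dist (f c) (f c') = Real.arccos ⟪sphPt v c, sphPt v c'⟫)
    (c : stdSimplex ℝ (Fin (k + 1))) (v' : Y)
    (hle : ∀ i : Fin (k + 1), dist v' (f (simplexVertex i)) ≤ dist (f c) (f (simplexVertex i))) :
    v' = f c := by
  classical
  obtain ⟨u, hu⟩ := hhem
  set p := sphPt v c with hp
  have hπ := Real.pi_pos
  have hc0 : ∀ i, 0 ≤ c.1 i := c.2.1
  have hcsum : ∑ j, c.1 j = 1 := c.2.2
  have hex : ∃ i, 0 < c.1 i := by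
    by_contra h
    push_neg at h
    have : ∑ j, c.1 j = 0 := Finset.sum_eq_zero fun i _ => le_antisymm (h i) (hc0 i)
    rw [hcsum] at this
    norm_num at this
  have hcadm : SP0.Adm u v c.1 := by
    refine ⟨hc0, ?_⟩
    rw [SP0.inner_ptA]
    refine Finset.sum_pos' (fun i _ => mul_nonneg (hc0 i) (hu i).le) ?_
    obtain ⟨i, hi⟩ := hex
    exact ⟨i, Finset.mem_univ i, mul_pos hi (hu i)⟩
  -- vertices
  have hept : ∀ i, SP0.ptA v (SP0.evtx i) = v i := by
    intro i
    unfold SP0.ptA SP0.evtx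
    rw [show (∑ j, (if j = i then (1:ℝ) else 0) • v j)
        = ∑ j, (if j = i then v j else 0) from
      Finset.sum_congr rfl fun j _ => by split <;> simp]
    rw [Finset.sum_ite_eq' Finset.univ i (fun j => v j)]
    simp
  have hesum : ∀ i : Fin (k + 1), ∑ j : Fin (k + 1), SP0.evtx i j = 1 := by
    intro i
    unfold SP0.evtx
    rw [Finset.sum_ite_eq' Finset.univ i (fun _ => (1:ℝ))]
    simp
  have headm : ∀ i, SP0.Adm u v (SP0.evtx i) := by
    intro i
    refine ⟨fun j => by unfold SP0.evtx; split <;> norm_num, ?_⟩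
    rw [hept i]
    exact hu i
  have hecoord : ∀ i : Fin (k + 1), SP0.coordA (SP0.evtx i) = simplexVertex (k := k) i := by
    intro i
    apply Subtype.ext
    rw [SP0.coordA_eq (headm i).1 (by rw [hesum i]; norm_num)]
    funext j
    rw [hesum i]
    show SP0.evtx i j / 1 = _
    rw [div_one]
    rfl
  have hnze : ∀ i, SP0.nzv (v i) = v i := by
    intro i
    unfold SP0.nzv
    rw [hnorm i]
    simp
  have hsphe : ∀ i, sphPt v (simplexVertex i) = v i := by
    intro i
    rw [← hecoord i, SP0.sphPt_coordA v (headm i), hept i, hnze i]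
  -- p facts
  have hcoordc : SP0.coordA c.1 = c := by
    apply Subtype.ext
    rw [SP0.coordA_eq hc0 (by rw [hcsum]; norm_num)]
    funext i
    rw [hcsum, div_one]
  have hpz : p = SP0.nzv (SP0.ptA v c.1) := by
    rw [hp, ← SP0.sphPt_coordA v hcadm, hcoordc]
  have hpnorm : ‖p‖ = 1 := by
    rw [hpz]
    exact SP0.norm_nzv hcadm.ptA_ne
  -- vertex inequality
  have hPe : ∀ i, SP0.Pp v f v' p (SP0.evtx i) := by
    intro i
    show ⟪SP0.nzv (SP0.ptA v (SP0.evtx i)), p⟫ ≤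
      Real.cos (dist v' (f (SP0.coordA (SP0.evtx i))))
    rw [hept i, hecoord i, hnze i]
    have hb : |⟪p, v i⟫| ≤ 1 := by
      have := abs_real_inner_le_norm p (v i)
      rw [hpnorm, hnorm i] at this
      simpa using this
    have h1 : dist v' (f (simplexVertex i)) ≤ Real.arccos ⟪p, v i⟫ := by
      have h2 := hle i
      rw [hf c (simplexVertex i), hsphe i, ← hp] at h2
      exact h2
    have h2 : Real.cos (Real.arccos ⟪p, v i⟫) ≤ Real.cos (dist v' (f (simplexVertex i))) :=
      Real.cos_le_cos_of_nonneg_of_le_pi dist_nonneg (Real.arccos_le_pi _) h1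
    rw [Real.cos_arccos (abs_le.1 hb).1 (abs_le.1 hb).2] at h2
    rw [real_inner_comm]
    exact h2
  -- main induction on the support
  have main : ∀ n : ℕ, ∀ a : Fin (k + 1) → ℝ, SP0.Adm u v a →
      (∀ i : Fin (k + 1), n ≤ (i : ℕ) → a i = 0) → SP0.Pp v f v' p a := by
    intro n
    induction n with
    | zero =>
      intro a ha hsupp
      exfalso
      apply ha.ptA_ne
      unfold SP0.ptA
      exact Finset.sum_eq_zero fun i _ => by rw [hsupp i (Nat.zero_le _), zero_smul]
    | succ n ih =>
      intro a ha hsupp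
      by_cases hn : n < k + 1
      · set n' : Fin (k + 1) := ⟨n, hn⟩ with hn'
        by_cases hall : ∀ i, i ≠ n' → a i = 0
        · have hann : 0 < a n' := by
            rcases lt_or_eq_of_le (ha.1 n') with h | h
            · exact h
            · exfalso
              apply ha.ptA_ne
              unfold SP0.ptA
              refine Finset.sum_eq_zero fun i _ => ?_
              by_cases hi : i = n'
              · rw [hi, ← h, zero_smul]
              · rw [hall i hi, zero_smul]
          have hae : a = a n' • SP0.evtx n' := by
            funext j
            by_cases hj : j = n'
            · subst hj
              simp [SP0.evtx]
            · simp [SP0.evtx, hj, hall j hj]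
          rw [hae]
          exact (SP0.Pp_smul hann (headm n')).2 (hPe n')
        · push_neg at hall
          obtain ⟨i₀, hi₀ne, hi₀⟩ := hall
          have hi₀pos : 0 < a i₀ := lt_of_le_of_ne (ha.1 i₀) (Ne.symm hi₀)
          set A1 : Fin (k + 1) → ℝ := fun j => if j = n' then 0 else a j with hA1
          set B1 : Fin (k + 1) → ℝ := fun j => if j = n' then a n' else 0 with hB1
          have hAB : A1 + B1 = a := by
            funext j
            by_cases hj : j = n' <;> simp [hA1, hB1, hj]
          have hA1adm : SP0.Adm u v A1 := by
            refine ⟨fun j => by rw [hA1]; dsimp only; split; exacts [le_refl 0, ha.1 j], ?_⟩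
            rw [SP0.inner_ptA]
            refine Finset.sum_pos' (fun i _ => ?_) ⟨i₀, Finset.mem_univ i₀, ?_⟩
            · refine mul_nonneg ?_ (hu i).le
              rw [hA1]; dsimp only; split; exacts [le_refl 0, ha.1 i]
            · have : A1 i₀ = a i₀ := by rw [hA1]; dsimp only; rw [if_neg hi₀ne]
              rw [this]
              exact mul_pos hi₀pos (hu i₀)
          have hA1supp : ∀ i : Fin (k + 1), n ≤ (i : ℕ) → A1 i = 0 := by
            intro i hi
            rw [hA1]
            dsimp only
            by_cases hieq : i = n'
            · rw [if_pos hieq]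
            · rw [if_neg hieq]
              refine hsupp i ?_
              have : (i : ℕ) ≠ n := fun h => hieq (Fin.ext h)
              omega
          by_cases hz : a n' = 0
          · have haA : a = A1 := by
              funext j
              by_cases hj : j = n'
              · subst hj; rw [hA1]; dsimp only; rw [if_pos rfl, hz]
              · rw [hA1]; dsimp only; rw [if_neg hj]
            rw [haA]
            exact ih A1 hA1adm hA1supp
          · have hzpos : 0 < a n' := lt_of_le_of_ne (ha.1 n') (Ne.symm hz)
            have hB1e : B1 = a n' • SP0.evtx n' := by
              funext j
              by_cases hj : j = n' <;> simp [hB1, SP0.evtx, hj]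
            have hB1adm : SP0.Adm u v B1 := by
              rw [hB1e]
              refine ⟨fun j => ?_, ?_⟩
              · simp only [Pi.smul_apply, smul_eq_mul]
                exact mul_nonneg hzpos.le ((headm n').1 j)
              · rw [SP0.ptA_smul, real_inner_smul_right, hept n']
                exact mul_pos hzpos (hu n')
            have hPA1 : SP0.Pp v f v' p A1 := ih A1 hA1adm hA1supp
            have hPB1 : SP0.Pp v f v' p B1 := by
              rw [hB1e]
              exact (SP0.Pp_smul hzpos (headm n')).2 (hPe n')
            have hseg := SP0.seg_lemma hY hf hA1adm hB1adm hPA1 hPB1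
              (1/2) (by norm_num)
            have hhalf : (1 - (1:ℝ)/2) • A1 + ((1:ℝ)/2) • B1 = ((1:ℝ)/2) • a := by
              rw [← hAB]
              funext j
              simp only [Pi.add_apply, Pi.smul_apply, smul_eq_mul]
              ring
            rw [hhalf] at hseg
            exact (SP0.Pp_smul (by norm_num) ha).1 hseg
      · exact ih a ha fun i hi => absurd i.isLt (by omega)
  -- conclusion
  have hPc := main (k + 1) c.1 hcadm (fun i hi => absurd i.isLt (by omega))
  have h1 : (1:ℝ) ≤ Real.cos (dist v' (f c)) := by
    have h2 : ⟪SP0.nzv (SP0.ptA v c.1), p⟫ ≤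
        Real.cos (dist v' (f (SP0.coordA c.1))) := hPc
    rw [hcoordc, ← hpz] at h2
    rwa [real_inner_self_eq_norm_sq, hpnorm, one_pow] at h2
  have h2 : Real.cos (dist v' (f c)) = 1 := le_antisymm (Real.cos_le_one _) h1
  have h3 : dist v' (f c) = 0 := by
    have hub := hY.1 v' (f c)
    have hlb : (0:ℝ) ≤ dist v' (f c) := dist_nonneg
    exact (Real.cos_eq_one_iff_of_lt_of_lt (by nlinarith) (by nlinarith)).1 h2
  exact dist_eq_zero.1 h3
end
end

section
/- Let Y be a CAT(0) metric space, p ∈ Y a basepoint, and S ⊂ Y a closed subset with the geodesic extension property: for every q ∈ S and every geodesic segment from p to q, there is a geodesic ray from q contained in S extending the segment to a geodesic ray from p. Then for all 0 < r ≤ R, the r-ball intersection satisfies B(p, r) ∩ S ⊆ Φ_{r,R}(B(p, R) ∩ S), where Φ_{r,R}: B(p,R) → B(p,r) contracts points toward p by the factor r/R along geodesics. Consequently, if S has Hausdorff dimension bounds so that n-dimensional Hausdorff measure H^n is considered, then H^n(B(p,r) ∩ S)/r^n ≤ H^n(B(p,R) ∩ S)/R^n. -/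
noncomputable section

open Metric Set

open MeasureTheory

/-- `S` has the geodesic extension property: for every `p` and `y ∈ S`, some geodesic ray
from `p` through `y` eventually stays in `S` (beyond `y`). -/
def GeodesicExtensionProperty {X : Type*} [MetricSpace X] (S : Set X) : Prop :=
  ∀ p : X, ∀ y ∈ S, ∃ γ : ℝ → X, IsGeodesicRay γ ∧ γ 0 = p ∧ γ (dist p y) = y ∧
    ∀ t : ℝ, dist p y ≤ t → γ t ∈ S

section Aux

variable {X : Type*} [MetricSpace X]

lemma aux_exists_midpoint (h : GeodesicMetricSpace X) (z z' : X) :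
    ∃ m, IsMidpoint m z z' := by
  obtain ⟨γ, h0, h1, hiso⟩ := h z z'
  have hd : 0 ≤ dist z z' := dist_nonneg
  have hmem0 : (0 : ℝ) ∈ Set.Icc 0 (dist z z') := ⟨le_rfl, hd⟩
  have hmemh : dist z z' / 2 ∈ Set.Icc 0 (dist z z') := ⟨by linarith, by linarith⟩
  have hmem1 : dist z z' ∈ Set.Icc 0 (dist z z') := ⟨hd, le_rfl⟩
  refine ⟨γ (dist z z' / 2), ?_, ?_⟩
  · have e := hiso 0 hmem0 _ hmemh
    rw [h0] at e
    rw [e, zero_sub, abs_neg, abs_of_nonneg (by linarith)]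
  · have e := hiso _ hmemh _ hmem1
    rw [h1] at e
    rw [e, show dist z z' / 2 - dist z z' = -(dist z z' / 2) by ring, abs_neg,
      abs_of_nonneg (by linarith)]

lemma aux_IsMidpoint_symm {m x y : X} (h : IsMidpoint m x y) : IsMidpoint m y x := by
  obtain ⟨h1, h2⟩ := h
  exact ⟨by rw [dist_comm y m, dist_comm y x]; exact h2,
    by rw [dist_comm m x, dist_comm y x]; exact h1⟩

/-- Half-lemma: midpoints from a common apex. -/
lemma aux_half (hCN : ∀ x y z m : X, IsMidpoint m y z →
      dist x m ^ 2 ≤ (dist x y ^ 2 + dist x z ^ 2) / 2 - dist y z ^ 2 / 4)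
    {p x y m₁ m₂ : X} (h₁ : IsMidpoint m₁ p x) (h₂ : IsMidpoint m₂ p y) :
    dist m₁ m₂ ≤ dist x y / 2 := by
  have A := hCN m₁ p y m₂ h₂
  have B := hCN y p x m₁ h₁
  rw [dist_comm m₁ p, h₁.1] at A
  rw [dist_comm y p, dist_comm y x, dist_comm y m₁] at B
  have key : dist m₁ m₂ ^ 2 ≤ dist x y ^ 2 / 4 := by linarith
  nlinarith [dist_nonneg (x := m₁) (y := m₂), dist_nonneg (x := x) (y := y)]

/-- Quadrilateral midpoint lemma. -/
lemma aux_quad (hY : CAT0Space X) {x₁ x₂ y₁ y₂ m₁ m₂ : X}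
    (h₁ : IsMidpoint m₁ x₁ x₂) (h₂ : IsMidpoint m₂ y₁ y₂) :
    dist m₁ m₂ ≤ (dist x₁ y₁ + dist x₂ y₂) / 2 := by
  obtain ⟨m, hm⟩ := aux_exists_midpoint hY.1 x₁ y₂
  have e1 : dist m₁ m ≤ dist x₂ y₂ / 2 := aux_half hY.2 h₁ hm
  have e2 : dist m m₂ ≤ dist x₁ y₁ / 2 := by
    exact aux_half hY.2 (aux_IsMidpoint_symm hm) (aux_IsMidpoint_symm h₂)
  linarith [dist_triangle m₁ m m₂]

/-- Uniqueness of the between-point in a CAT(0) space. -/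
lemma aux_between_unique (hY : CAT0Space X) (x y z z' : X) (t : ℝ)
    (hz1 : dist x z = t) (hz2 : dist z y = dist x y - t)
    (hz1' : dist x z' = t) (hz2' : dist z' y = dist x y - t) : z = z' := by
  obtain ⟨m, hm⟩ := aux_exists_midpoint hY.1 z z'
  have A := hY.2 x z z' m hm
  have B := hY.2 y z z' m hm
  rw [hz1, hz1'] at A
  rw [dist_comm y z, dist_comm y z', hz2, hz2'] at B
  have ht0 : 0 ≤ t := hz1 ▸ dist_nonneg
  have htd : t ≤ dist x y := by
    have h := dist_nonneg (x := z) (y := y); rw [hz2] at h; linarith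
  have htri := dist_triangle x m y
  rw [dist_comm m y] at htri
  have hxm : 0 ≤ dist x m := dist_nonneg
  have hym : 0 ≤ dist y m := dist_nonneg
  have he0 : 0 ≤ dist z z' := dist_nonneg
  have h1 : dist x m ≤ t := by nlinarith [sq_nonneg (dist z z')]
  have h2 : dist y m ≤ dist x y - t := by nlinarith [sq_nonneg (dist z z')]
  have h3 : t ≤ dist x m := by linarith
  have he : dist z z' ^ 2 ≤ 0 := by nlinarith
  have : dist z z' = 0 := by nlinarith [sq_nonneg (dist z z')]
  exact dist_eq_zero.mp this

/-- Midpoints along a geodesic segment. -/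
lemma aux_seg_midpoint {γ : ℝ → X} {x y : X} (hγ : IsGeodesicSegment γ x y)
    {s t : ℝ} (hs : s ∈ Set.Icc 0 (dist x y)) (ht : t ∈ Set.Icc 0 (dist x y)) :
    IsMidpoint (γ ((s + t) / 2)) (γ s) (γ t) := by
  have hm : (s + t) / 2 ∈ Set.Icc 0 (dist x y) :=
    ⟨by linarith [hs.1, ht.1], by linarith [hs.2, ht.2]⟩
  have d1 := hγ.2.2 s hs _ hm
  have d2 := hγ.2.2 _ hm t ht
  have d3 := hγ.2.2 s hs t ht
  constructor
  · rw [d1, d3, show s - (s + t) / 2 = (s - t) / 2 by ring, abs_div]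
    norm_num
  · rw [d2, d3, show (s + t) / 2 - t = (s - t) / 2 by ring, abs_div]
    norm_num

/-- Convexity of the metric in a CAT(0) space, for geodesics from a common point. -/
lemma aux_convexity (hY : CAT0Space X) {γ σ : ℝ → X} {p x y : X}
    (hγ : IsGeodesicSegment γ p x) (hσ : IsGeodesicSegment σ p y)
    {l : ℝ} (hl0 : 0 ≤ l) (hl1 : l ≤ 1) :
    dist (γ (l * dist p x)) (σ (l * dist p y)) ≤ l * dist x y := by
  have ha : 0 ≤ dist p x := dist_nonneg
  have hb : 0 ≤ dist p y := dist_nonneg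
  have hc : 0 ≤ dist x y := dist_nonneg
  have hmema : ∀ u : ℝ, 0 ≤ u → u ≤ 1 → u * dist p x ∈ Set.Icc 0 (dist p x) := by
    intro u h0 h1; exact ⟨mul_nonneg h0 ha, by nlinarith⟩
  have hmemb : ∀ u : ℝ, 0 ≤ u → u ≤ 1 → u * dist p y ∈ Set.Icc 0 (dist p y) := by
    intro u h0 h1; exact ⟨mul_nonneg h0 hb, by nlinarith⟩
  set g : ℝ → ℝ := fun u => dist (γ (u * dist p x)) (σ (u * dist p y)) with hgdef
  set T : Set ℝ := (fun u => g u - u * dist x y) '' Set.Icc 0 1 with hTdef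
  have hne : T.Nonempty := ⟨g 0 - 0 * dist x y, ⟨0, ⟨le_rfl, zero_le_one⟩, rfl⟩⟩
  have hbdd : BddAbove T := by
    refine ⟨dist p x + dist p y, ?_⟩
    rintro v ⟨u, ⟨hu0, hu1⟩, rfl⟩
    have e1 : dist (γ (u * dist p x)) p = u * dist p x := by
      have e := hγ.2.2 _ (hmema u hu0 hu1) 0 ⟨le_rfl, ha⟩
      rw [hγ.1] at e
      rw [e, sub_zero, abs_of_nonneg (mul_nonneg hu0 ha)]
    have e2 : dist p (σ (u * dist p y)) = u * dist p y := by
      have e := hσ.2.2 0 ⟨le_rfl, hb⟩ _ (hmemb u hu0 hu1)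
      rw [hσ.1] at e
      rw [e, zero_sub, abs_neg, abs_of_nonneg (mul_nonneg hu0 hb)]
    have := dist_triangle (γ (u * dist p x)) p (σ (u * dist p y))
    simp only [hgdef]
    nlinarith [mul_nonneg hu0 hc]
  set M := sSup T with hMdef
  have key : ∀ u ∈ Set.Icc (0:ℝ) 1, g u - u * dist x y ≤ M / 2 := by
    rintro u ⟨hu0, hu1⟩
    rcases le_or_gt u (1/2) with h | h
    · have h2l0 : (0:ℝ) ≤ 2 * u := by linarith
      have h2l1 : 2 * u ≤ 1 := by linarith
      have m1 := aux_seg_midpoint hγ (⟨le_rfl, ha⟩ : (0:ℝ) ∈ Set.Icc 0 (dist p x))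
        (hmema (2*u) h2l0 h2l1)
      have m2 := aux_seg_midpoint hσ (⟨le_rfl, hb⟩ : (0:ℝ) ∈ Set.Icc 0 (dist p y))
        (hmemb (2*u) h2l0 h2l1)
      rw [show (0 + 2 * u * dist p x) / 2 = u * dist p x by ring, hγ.1] at m1
      rw [show (0 + 2 * u * dist p y) / 2 = u * dist p y by ring, hσ.1] at m2
      have hhalf := aux_half hY.2 m1 m2
      have hT : g (2*u) - (2*u) * dist x y ≤ M :=
        le_csSup hbdd ⟨2*u, ⟨h2l0, h2l1⟩, rfl⟩
      simp only [hgdef] at hT hhalf ⊢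
      linarith
    · have hl'0 : (0:ℝ) ≤ 2 * u - 1 := by linarith
      have hl'1 : 2 * u - 1 ≤ 1 := by linarith
      have m1 := aux_seg_midpoint hγ (hmema (2*u-1) hl'0 hl'1)
        (⟨ha, le_rfl⟩ : dist p x ∈ Set.Icc 0 (dist p x))
      have m2 := aux_seg_midpoint hσ (hmemb (2*u-1) hl'0 hl'1)
        (⟨hb, le_rfl⟩ : dist p y ∈ Set.Icc 0 (dist p y))
      rw [show ((2*u-1) * dist p x + dist p x) / 2 = u * dist p x by ring, hγ.2.1] at m1
      rw [show ((2*u-1) * dist p y + dist p y) / 2 = u * dist p y by ring, hσ.2.1] at m2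
      have hquad := aux_quad hY m1 m2
      have hT : g (2*u-1) - (2*u-1) * dist x y ≤ M :=
        le_csSup hbdd ⟨2*u-1, ⟨hl'0, hl'1⟩, rfl⟩
      simp only [hgdef] at hT hquad ⊢
      linarith
  have hM : M ≤ M / 2 := by
    refine csSup_le hne ?_
    rintro v ⟨u, hu, rfl⟩
    exact key u hu
  have hM0 : M ≤ 0 := by linarith
  have hfin : g l - l * dist x y ≤ M := le_csSup hbdd ⟨l, ⟨hl0, hl1⟩, rfl⟩
  simp only [hgdef] at hfin
  linarith

end Aux

/-- Let `Y` be a CAT(0) space, `p ∈ Y`, and `S ⊆ Y` a closed subset with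
the geodesic extension property. Then for `0 < r ≤ R` every point of `B(p,r) ∩ S` is the
image of a point of `B(p,R) ∩ S` under the geodesic contraction towards `p` by the factor
`r/R`; consequently the density `H^n(B(p,r) ∩ S) / rⁿ` is monotone nondecreasing in `r`
(stated multiplicatively in `ℝ≥0∞`). -/
theorem geodesic_contraction_density_monotone {Y : Type*} [MetricSpace Y]
    [MeasurableSpace Y] [BorelSpace Y]
    (hY : CAT0Space Y) (p : Y) (S : Set Y) (hS : IsClosed S)
    (hext : GeodesicExtensionProperty S)
    (r R : ℝ) (hr : 0 < r) (hrR : r ≤ R) :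
    (∀ x ∈ Metric.ball p r ∩ S, ∃ y ∈ Metric.ball p R ∩ S, ∃ γ : ℝ → Y,
      IsGeodesicSegment γ p y ∧ x = γ (r / R * dist p y)) ∧
    (∀ n : ℕ, μH[n] (Metric.ball p r ∩ S) * ENNReal.ofReal (R ^ n) ≤
      μH[n] (Metric.ball p R ∩ S) * ENNReal.ofReal (r ^ n)) := by
  have hRpos : 0 < R := lt_of_lt_of_le hr hrR
  have hlam0 : 0 ≤ r / R := by positivity
  have hlam1 : r / R ≤ 1 := (div_le_one hRpos).mpr hrR
  have part1 : ∀ x ∈ Metric.ball p r ∩ S, ∃ y ∈ Metric.ball p R ∩ S, ∃ γ : ℝ → Y,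
      IsGeodesicSegment γ p y ∧ x = γ (r / R * dist p y) := by
    rintro x ⟨hxr, hxS⟩
    obtain ⟨γ, hray, h0, hx, hmem⟩ := hext p x hxS
    have hd0 : 0 ≤ dist p x := dist_nonneg
    have hdr : dist p x < r := by rw [dist_comm]; exact Metric.mem_ball.mp hxr
    set t₀ := R / r * dist p x with ht₀def
    have ht₀0 : 0 ≤ t₀ := by positivity
    have hdist : dist p (γ t₀) = t₀ := by
      have e := hray 0 t₀ le_rfl ht₀0
      rw [h0] at e
      rw [e, zero_sub, abs_neg, abs_of_nonneg ht₀0]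
    have h1R : 1 ≤ R / r := (one_le_div hr).mpr hrR
    have hdt : dist p x ≤ t₀ := by nlinarith
    have ht₀R : t₀ < R := by
      have : R / r * dist p x < R / r * r :=
        mul_lt_mul_of_pos_left hdr (div_pos hRpos hr)
      rwa [div_mul_cancel₀ R hr.ne'] at this
    refine ⟨γ t₀, ⟨Metric.mem_ball.mpr (by rw [dist_comm, hdist]; exact ht₀R),
      hmem t₀ hdt⟩, γ, ⟨h0, by rw [hdist], ?_⟩, ?_⟩
    · intro s hs t ht
      exact hray s t hs.1 ht.1
    · rw [hdist, show r / R * t₀ = dist p x by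
        rw [ht₀def]; field_simp]
      exact hx.symm
  refine ⟨part1, ?_⟩
  intro n
  have hgeo := hY.1
  set Φ : Y → Y := fun z => (hgeo p z).choose (r / R * dist p z) with hΦ
  have hΦspec : ∀ z, IsGeodesicSegment (hgeo p z).choose p z := fun z => (hgeo p z).choose_spec
  have hlip : LipschitzWith (Real.toNNReal (r / R)) Φ := by
    apply LipschitzWith.of_dist_le_mul
    intro z w
    have h := aux_convexity hY (hΦspec z) (hΦspec w) hlam0 hlam1
    simp only [hΦ]
    rwa [Real.coe_toNNReal _ hlam0]
  have hsub : Metric.ball p r ∩ S ⊆ Φ '' (Metric.ball p R ∩ S) := by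
    intro x hx
    obtain ⟨y, hy, γ, hγ, hxγ⟩ := part1 x hx
    refine ⟨y, hy, ?_⟩
    have hdy : 0 ≤ dist p y := dist_nonneg
    set t := r / R * dist p y with htdef
    have ht0 : 0 ≤ t := mul_nonneg hlam0 hdy
    have htd : t ≤ dist p y := by nlinarith
    have htmem : t ∈ Set.Icc 0 (dist p y) := ⟨ht0, htd⟩
    have h0mem : (0:ℝ) ∈ Set.Icc 0 (dist p y) := ⟨le_rfl, hdy⟩
    have h1mem : dist p y ∈ Set.Icc 0 (dist p y) := ⟨hdy, le_rfl⟩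
    have e1 : dist p (γ t) = t := by
      have e := hγ.2.2 0 h0mem t htmem
      rw [hγ.1] at e
      rw [e, zero_sub, abs_neg, abs_of_nonneg ht0]
    have e2 : dist (γ t) y = dist p y - t := by
      have e := hγ.2.2 t htmem _ h1mem
      rw [hγ.2.1] at e
      rw [e, abs_of_nonpos (by linarith), neg_sub]
    have e1' : dist p ((hgeo p y).choose t) = t := by
      have e := (hΦspec y).2.2 0 h0mem t htmem
      rw [(hΦspec y).1] at e
      rw [e, zero_sub, abs_neg, abs_of_nonneg ht0]
    have e2' : dist ((hgeo p y).choose t) y = dist p y - t := by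
      have e := (hΦspec y).2.2 t htmem _ h1mem
      rw [(hΦspec y).2.1] at e
      rw [e, abs_of_nonpos (by linarith), neg_sub]
    have huniq := aux_between_unique hY p y (γ t) ((hgeo p y).choose t) t e1 e2 e1' e2'
    show (hgeo p y).choose (r / R * dist p y) = x
    rw [← htdef, ← huniq, hxγ, htdef]
  have hd0 : (0:ℝ) ≤ (n:ℝ) := Nat.cast_nonneg n
  have himg := hlip.hausdorffMeasure_image_le hd0 (Metric.ball p R ∩ S)
  have step1 : μH[n] (Metric.ball p r ∩ S) ≤
      (Real.toNNReal (r / R) : ENNReal) ^ (n:ℝ) * μH[n] (Metric.ball p R ∩ S) :=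
    le_trans (measure_mono hsub) himg
  have hpow : (Real.toNNReal (r / R) : ENNReal) ^ (n:ℝ) = ENNReal.ofReal ((r / R) ^ n) := by
    rw [ENNReal.rpow_natCast, ENNReal.ofReal_pow hlam0]
    rfl
  calc μH[n] (Metric.ball p r ∩ S) * ENNReal.ofReal (R ^ n)
      ≤ ((Real.toNNReal (r / R) : ENNReal) ^ (n:ℝ) * μH[n] (Metric.ball p R ∩ S)) *
        ENNReal.ofReal (R ^ n) := mul_le_mul_left step1 _
    _ = μH[n] (Metric.ball p R ∩ S) * ENNReal.ofReal (r ^ n) := by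
        rw [hpow, mul_comm (ENNReal.ofReal ((r / R) ^ n)) _, mul_assoc,
          ← ENNReal.ofReal_mul (by positivity)]
        congr 1
        rw [div_pow, div_mul_cancel₀]
        positivity
end
end
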